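/- Let K be a field, let G ∈ K[[z]][t] be a polynomial in t with power series coefficients, and let f, f₁, f₂ ∈ K[[z]] and an integer s ≥ 2 be such that f'² = G(z, f), f ≡ f₁ mod z^s, z^s divides f₂, and f ≡ f₁ + f₂ mod z^{2s−1}. Then f₂ satisfies the linearized equation 2·f₁'·f₂' − G_t(z, f₁)·f₂ ≡ G(z, f₁) − f₁'² mod z^{2s−2}, where G_t denotes the derivative of G with respect to t. -/

import Mathlib

open PowerSeries

section

variable {R : Type*} [CommRing R]

theorem X_pow_dvd_sub_iff_coeff_eq {f g : PowerSeries R} {n : ℕ} :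
    (X : PowerSeries R) ^ n ∣ f - g ↔ ∀ j < n, coeff (R := R) j f = coeff (R := R) j g := by
  simp only [X_pow_dvd_iff, map_sub, sub_eq_zero]

theorem X_pow_dvd_derivative {f : PowerSeries R} {n : ℕ} (h : (X : PowerSeries R) ^ n ∣ f) :
    (X : PowerSeries R) ^ (n - 1) ∣ d⁄dX R f := by
  rw [X_pow_dvd_iff] at h ⊢
  intro m hm
  rw [coeff_derivative, h (m + 1) (by omega), zero_mul]

theorem Polynomial.sq_sub_dvd_eval_sub_sub_derivative_mul (p : Polynomial R) (a b : R) :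
    (a - b) ^ 2 ∣ p.eval a - p.eval b - p.derivative.eval b * (a - b) := by
  obtain ⟨k, hk⟩ := p.binomExpansion b (a - b)
  rw [add_sub_cancel] at hk
  exact ⟨k, by rw [hk]; ring⟩

/-- Modulo `X ^ (2 * s - 2)`, `f'² ≡ (f₁' + f₂')² ≡ f₁'² + 2 f₁' f₂'` and
`G(f) ≡ G(f₁) + G_t(f₁) (f - f₁) ≡ G(f₁) + G_t(f₁) f₂`, because `f₂'²`, `(f - f₁)²`,
`f' - f₁' - f₂'` and `f - f₁ - f₂` all vanish to that order. -/
theorem X_pow_dvd_linearized_sub (G : Polynomial (PowerSeries R)) {f f₁ f₂ : PowerSeries R}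
    {s : ℕ} (hode : (d⁄dX R f) ^ 2 = G.eval f) (h1 : (X : PowerSeries R) ^ s ∣ f - f₁)
    (h2 : (X : PowerSeries R) ^ s ∣ f₂) (h3 : (X : PowerSeries R) ^ (2 * s - 1) ∣ f - (f₁ + f₂)) :
    (X : PowerSeries R) ^ (2 * s - 2) ∣
      (2 * d⁄dX R f₁ * d⁄dX R f₂ - G.derivative.eval f₁ * f₂) - (G.eval f₁ - (d⁄dX R f₁) ^ 2) := by
  set f' := d⁄dX R f
  set f₁' := d⁄dX R f₁
  set f₂' := d⁄dX R f₂
  have hTaylor : (X : PowerSeries R) ^ (2 * s - 2) ∣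
      G.eval f - G.eval f₁ - G.derivative.eval f₁ * (f - f₁) := by
    refine (pow_dvd_pow X (by omega : 2 * s - 2 ≤ s * 2)).trans ?_
    rw [pow_mul]
    exact (pow_dvd_pow_of_dvd h1 2).trans (G.sq_sub_dvd_eval_sub_sub_derivative_mul f f₁)
  have hf : (X : PowerSeries R) ^ (2 * s - 2) ∣ G.derivative.eval f₁ * (f - f₁ - f₂) := by
    rw [sub_sub]
    exact ((pow_dvd_pow X (by omega)).trans h3).mul_left _
  have hf' : (X : PowerSeries R) ^ (2 * s - 2) ∣ (f' - f₁' - f₂') * (f' + f₁' + f₂') := by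
    have := X_pow_dvd_derivative h3
    rw [map_sub, map_add, ← sub_sub, show 2 * s - 1 - 1 = 2 * s - 2 by omega] at this
    exact this.mul_right _
  have hf₂' : (X : PowerSeries R) ^ (2 * s - 2) ∣ f₂' ^ 2 := by
    rw [show 2 * s - 2 = (s - 1) * 2 by omega, pow_mul]
    exact pow_dvd_pow_of_dvd (X_pow_dvd_derivative h2) 2
  have key : (2 * f₁' * f₂' - G.derivative.eval f₁ * f₂) - (G.eval f₁ - f₁' ^ 2) =
      (G.eval f - G.eval f₁ - G.derivative.eval f₁ * (f - f₁))
        + G.derivative.eval f₁ * (f - f₁ - f₂)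
        - (f' - f₁' - f₂') * (f' + f₁' + f₂') - f₂' ^ 2 := by
    rw [← hode]
    ring
  rw [key]
  exact ((hTaylor.add hf).sub hf').sub hf₂'

end

theorem newton_linearized_equation_general {K : Type*} [Field K]
    (G : Polynomial (PowerSeries K)) (f f₁ f₂ : PowerSeries K) (s : ℕ)
    (hode : (d⁄dX K f) ^ 2 = Polynomial.eval f G)
    (h1 : ∀ j < s, coeff (R := K) j f = coeff (R := K) j f₁)
    (h2 : (X : PowerSeries K) ^ s ∣ f₂)
    (h3 : ∀ j < 2 * s - 1, coeff (R := K) j f = coeff (R := K) j (f₁ + f₂)) :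
    ∀ j < 2 * s - 2,
      coeff (R := K) j (2 * d⁄dX K f₁ * d⁄dX K f₂ - Polynomial.eval f₁ (Polynomial.derivative G) * f₂)
        = coeff (R := K) j (Polynomial.eval f₁ G - (d⁄dX K f₁) ^ 2) := by
  rw [← X_pow_dvd_sub_iff_coeff_eq] at h1 h3 ⊢
  exact X_pow_dvd_linearized_sub G hode h1 h2 h3

/-- The linearization step of Brent and Kung's Newton iteration for the differential
equation `f'² = G(z, f)`: if `f'² = G(z,f)`, `f ≡ f₁ mod z^s`, `z^s ∣ f₂` and
`f ≡ f₁ + f₂ mod z^(2s-1)`, then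
`2·f₁'·f₂' − G_t(z,f₁)·f₂ ≡ G(z,f₁) − f₁'² mod z^(2s-2)`. -/
theorem newton_linearized_equation {K : Type*} [Field K]
    (G : Polynomial (PowerSeries K)) (f f₁ f₂ : PowerSeries K) (s : ℕ) (hs : 2 ≤ s)
    (hode : (d⁄dX K f) ^ 2 = Polynomial.eval f G)
    (h1 : ∀ j < s, coeff (R := K) j f = coeff (R := K) j f₁)
    (h2 : (X : PowerSeries K) ^ s ∣ f₂)
    (h3 : ∀ j < 2 * s - 1, coeff (R := K) j f = coeff (R := K) j (f₁ + f₂)) :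
    ∀ j < 2 * s - 2,
      coeff (R := K) j (2 * d⁄dX K f₁ * d⁄dX K f₂ - Polynomial.eval f₁ (Polynomial.derivative G) * f₂)
        = coeff (R := K) j (Polynomial.eval f₁ G - (d⁄dX K f₁) ^ 2) :=
  newton_linearized_equation_general G f f₁ f₂ s hode h1 h2 h3
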